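/- arXiv:2103.01619 — 2 statements merged into one kernel-verified Lean document; each statement's English description precedes it below -/
import Mathlib

section
/- (Inheritance of G1 continuity by motion mode.) Suppose C'(u⁻) = β₁·C'(u⁺) with β₁ > 0, and for every r ∈ ℝ² the wheel derivative C'(u⁻) + θ'(u⁻)·J·R(θ)·r is a positive scalar multiple of C'(u⁺) + θ'(u⁺)·J·R(θ)·r (with the same orientation value θ at the junction). If C'(u⁺) ≠ 0, then θ'(u⁻) = β₁·θ'(u⁺), and each wheel's scalar multiple equals β₁. -/
noncomputable def rot (φ : ℝ) (v : ℝ × ℝ) : ℝ × ℝ :=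
  (Real.cos φ * v.1 - Real.sin φ * v.2, Real.sin φ * v.1 + Real.cos φ * v.2)

/-- Rotation by π/2. -/
def Jrot (v : ℝ × ℝ) : ℝ × ℝ := (-v.2, v.1)

/-! At the junction take the wheel offset `r = R(-θ) C'(u⁺)`, so that `J R(θ) r = J C'(u⁺)`.
Since `C'(u⁺)` and `J C'(u⁺)` form a basis of `ℝ²`, comparing coefficients in the G1
condition of this wheel gives both `θ'(u⁻) = β θ'(u⁺)` and `β = β₁`. For any other wheel,
the left-hand side is then `β₁` times the wheel derivative at `u⁺`, which fixes its
scalar to `β₁`. -/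

theorem rot_rot (φ ψ : ℝ) (v : ℝ × ℝ) : rot φ (rot ψ v) = rot (φ + ψ) v := by
  simp only [rot, Real.cos_add, Real.sin_add, Prod.mk.injEq]
  constructor <;> ring

theorem rot_zero (v : ℝ × ℝ) : rot 0 v = v := by
  simp [rot]

theorem rot_rot_neg (φ : ℝ) (v : ℝ × ℝ) : rot φ (rot (-φ) v) = v := by
  rw [rot_rot, add_neg_cancel, rot_zero]

theorem linearIndependent_Jrot {v : ℝ × ℝ} (hv : v ≠ 0) :
    LinearIndependent ℝ ![v, Jrot v] := by
  rw [LinearIndependent.pair_iff]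
  intro s t hst
  obtain ⟨x, y⟩ := v
  have hnorm : x ^ 2 + y ^ 2 ≠ 0 := by
    contrapose! hv
    ext <;> simp only [Prod.fst_zero, Prod.snd_zero] <;> nlinarith [sq_nonneg x, sq_nonneg y]
  simp only [Jrot, Prod.smul_mk, Prod.mk_add_mk, smul_eq_mul, Prod.mk_eq_zero] at hst
  obtain ⟨h₁, h₂⟩ := hst
  have hs : s * (x ^ 2 + y ^ 2) = 0 := by linear_combination x * h₁ + y * h₂
  have ht : t * (x ^ 2 + y ^ 2) = 0 := by linear_combination x * h₂ - y * h₁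
  exact ⟨(mul_eq_zero.mp hs).resolve_right hnorm, (mul_eq_zero.mp ht).resolve_right hnorm⟩

theorem motion_mode_inherits_G1_general (a' b' : ℝ × ℝ) (θ θm' θp' β₁ : ℝ)
    (hb : b' ≠ 0)
    (hG1 : a' = β₁ • b')
    (hwheel : ∀ r : ℝ × ℝ, ∃ β : ℝ, 0 < β ∧
      a' + θm' • Jrot (rot θ r) = β • (b' + θp' • Jrot (rot θ r))) :
    θm' = β₁ * θp' ∧
    ∀ r : ℝ × ℝ, ∀ β : ℝ, 0 < β →
      a' + θm' • Jrot (rot θ r) = β • (b' + θp' • Jrot (rot θ r)) →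
      b' + θp' • Jrot (rot θ r) ≠ 0 → β = β₁ := by
  obtain ⟨β, -, hβ⟩ := hwheel (rot (-θ) b')
  rw [rot_rot_neg, hG1] at hβ
  obtain ⟨hβ₁β, hθ⟩ := LinearIndependent.pair_iff.mp (linearIndependent_Jrot hb)
    (β₁ - β) (θm' - β * θp') (by linear_combination (norm := module) hβ)
  have hθm' : θm' = β₁ * θp' := by linear_combination hθ - θp' * hβ₁β
  refine ⟨hθm', fun r γ _ hγ hw => smul_left_injective ℝ hw ?_⟩
  change γ • (b' + θp' • Jrot (rot θ r)) = β₁ • _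
  rw [← hγ, hG1, hθm']
  module

/-- Inheritance of G1 continuity by the motion mode: if the curve is G1 with
shape parameter β₁ and every wheel path is G1 (with some positive scalar), then
θ' is G1 with the same β₁, and every wheel's scalar equals β₁. -/
theorem motion_mode_inherits_G1 (a' b' : ℝ × ℝ) (θ θm' θp' β₁ : ℝ)
    (hβ₁ : 0 < β₁) (hb : b' ≠ 0)
    (hG1 : a' = β₁ • b')
    (hwheel : ∀ r : ℝ × ℝ, ∃ β : ℝ, 0 < β ∧
      a' + θm' • Jrot (rot θ r) = β • (b' + θp' • Jrot (rot θ r))) :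
    θm' = β₁ * θp' ∧
    ∀ r : ℝ × ℝ, ∀ β : ℝ, 0 < β →
      a' + θm' • Jrot (rot θ r) = β • (b' + θp' • Jrot (rot θ r)) →
      b' + θp' • Jrot (rot θ r) ≠ 0 → β = β₁ :=
  motion_mode_inherits_G1_general a' b' θ θm' θp' β₁ hb hG1 hwheel
end

section
/- If C and θ are both G2 continuous at a junction with shared shape parameters β₁ > 0, β₂ ∈ ℝ (i.e., C'(u⁻)=β₁C'(u⁺), C''(u⁻)=β₁²C''(u⁺)+β₂C'(u⁺), θ'(u⁻)=β₁θ'(u⁺), θ''(u⁻)=β₁²θ''(u⁺)+β₂θ'(u⁺), and θ, C agree at the junction), then for every r ∈ ℝ² the wheel path C_w(u) = C(u) + R(θ(u))·r is G2 continuous at the junction with the same β₁, β₂. -/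
/-!
The wheel path is the curve plus the rigid offset `R(θ) r`, whose derivatives are
`θ' w` and `θ'' w - θ'² u` with `w = J R(θ) r` and `u = R(θ) r`. The G2 relations are linear,
so it suffices that the offset satisfies them; its second derivative is quadratic in `θ'`,
and this is absorbed because `θ'(u⁻)² = β₁² θ'(u⁺)²` carries exactly the factor `β₁²`
demanded of second derivatives.
-/

/-- `d₁m, d₂m` are the first and second derivatives at `u⁻`, and `d₁p, d₂p` those at `u⁺`. -/
def G2Join {R E : Type*} [CommRing R] [AddCommGroup E] [Module R E]
    (β₁ β₂ : R) (d₁m d₂m d₁p d₂p : E) : Prop :=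
  d₁m = β₁ • d₁p ∧ d₂m = β₁ ^ 2 • d₂p + β₂ • d₁p

namespace G2Join

variable {R E : Type*} [CommRing R] [AddCommGroup E] [Module R E] {β₁ β₂ : R}

theorem add {a₁ a₂ b₁ b₂ c₁ c₂ d₁ d₂ : E}
    (h : G2Join β₁ β₂ a₁ a₂ b₁ b₂) (h' : G2Join β₁ β₂ c₁ c₂ d₁ d₂) :
    G2Join β₁ β₂ (a₁ + c₁) (a₂ + c₂) (b₁ + d₁) (b₂ + d₂) := by
  obtain ⟨h₁, h₂⟩ := h
  obtain ⟨h'₁, h'₂⟩ := h'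
  constructor
  · rw [h₁, h'₁, smul_add]
  · rw [h₂, h'₂]
    module

theorem smul_sub_sq_smul {θm₁ θm₂ θp₁ θp₂ : R} (h : G2Join β₁ β₂ θm₁ θm₂ θp₁ θp₂) (u w : E) :
    G2Join β₁ β₂ (θm₁ • w) (θm₂ • w - θm₁ ^ 2 • u) (θp₁ • w) (θp₂ • w - θp₁ ^ 2 • u) := by
  obtain ⟨h₁, h₂⟩ := h
  subst h₁ h₂
  constructor <;> module

end G2Join

theorem wheel_path_G2_of_curve_and_mode_G2_general
    (a' a'' b' b'' : ℝ × ℝ) (θ θm' θp' θm'' θp'' β₁ β₂ : ℝ)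
    (hC1 : a' = β₁ • b')
    (hC2 : a'' = β₁ ^ 2 • b'' + β₂ • b')
    (hθ1 : θm' = β₁ * θp')
    (hθ2 : θm'' = β₁ ^ 2 * θp'' + β₂ * θp') :
    ∀ r : ℝ × ℝ,
      (a' + θm' • Jrot (rot θ r) = β₁ • (b' + θp' • Jrot (rot θ r))) ∧
      (a'' + θm'' • Jrot (rot θ r) - θm' ^ 2 • rot θ r =
        β₁ ^ 2 • (b'' + θp'' • Jrot (rot θ r) - θp' ^ 2 • rot θ r) +
        β₂ • (b' + θp' • Jrot (rot θ r))) := by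
  intro r
  have hC : G2Join β₁ β₂ a' a'' b' b'' := ⟨hC1, hC2⟩
  have hθ : G2Join β₁ β₂ θm' θm'' θp' θp'' := ⟨hθ1, hθ2⟩
  simpa only [G2Join, add_sub_assoc] using hC.add (hθ.smul_sub_sq_smul (rot θ r) (Jrot (rot θ r)))

/-- If curve and motion mode are G2 continuous at the junction with shared
shape parameters β₁, β₂, then every wheel path is G2 continuous with the same
parameters.  Here C_w' = C' + θ'·J·R(θ)·r and
C_w'' = C'' + θ''·J·R(θ)·r − (θ')²·R(θ)·r. -/
theorem wheel_path_G2_of_curve_and_mode_G2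
    (a' a'' b' b'' : ℝ × ℝ) (θ θm' θp' θm'' θp'' β₁ β₂ : ℝ)
    (hβ₁ : 0 < β₁)
    (hC1 : a' = β₁ • b')
    (hC2 : a'' = β₁ ^ 2 • b'' + β₂ • b')
    (hθ1 : θm' = β₁ * θp')
    (hθ2 : θm'' = β₁ ^ 2 * θp'' + β₂ * θp') :
    ∀ r : ℝ × ℝ,
      (a' + θm' • Jrot (rot θ r) = β₁ • (b' + θp' • Jrot (rot θ r))) ∧
      (a'' + θm'' • Jrot (rot θ r) - θm' ^ 2 • rot θ r =
        β₁ ^ 2 • (b'' + θp'' • Jrot (rot θ r) - θp' ^ 2 • rot θ r) +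
        β₂ • (b' + θp' • Jrot (rot θ r))) :=
  wheel_path_G2_of_curve_and_mode_G2_general a' a'' b' b'' θ θm' θp' θm'' θp'' β₁ β₂ hC1 hC2 hθ1 hθ2
end
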